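/- The junction component correctly transduces signal polarity: in any proper 2×2 placement of the junction tiles, the vertical input signal (i, −i) on the top edges forces the horizontal output signal (i above, −i below) on the outer side edges, and the vertical input (−i, i) forces the horizontal output (−i above, i below). -/
import Mathlib


/-- Edge labels: integers plus the special boundary markers `top`, `left`, `right`. -/
inductive Lab where
  | num : ℤ → Lab
  | top : Lab
  | left : Lab
  | right : Lab
deriving DecidableEq

/-- A Tetravex tile: labels on its top, right, bottom and left edges. -/
structure Tile where
  top : Lab
  right : Lab
  bottom : Lab
  left : Lab
deriving DecidableEq

/-- A placement on an `h × w` board (first index = row, second = column) is proper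
if horizontally adjacent tiles agree on the shared vertical edge and vertically
adjacent tiles agree on the shared horizontal edge. -/
def IsProper (h w : ℕ) (p : Fin h → Fin w → Tile) : Prop :=
  (∀ (i : Fin h) (j j' : Fin w), (j' : ℕ) = (j : ℕ) + 1 → (p i j).right = (p i j').left) ∧
  (∀ (i i' : Fin h) (j : Fin w), (i' : ℕ) = (i : ℕ) + 1 → (p i j).bottom = (p i' j).top)

/-- The multiset of tiles used by a placement. -/
def TilesOf (h w : ℕ) (p : Fin h → Fin w → Tile) : Multiset Tile :=
  (Finset.univ : Finset (Fin h × Fin w)).val.map fun q => p q.1 q.2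

/-- A multiset of tiles admits a proper tiling of an `h × w` board. -/
def Tileable (h w : ℕ) (T : Multiset Tile) : Prop :=
  ∃ p : Fin h → Fin w → Tile, TilesOf h w p = T ∧ IsProper h w p

/-- **The junction transduces the signal polarity correctly**: if the four
junction tiles of variable `i` with unique label `j` are placed as a 2×2 block
`a b / c d` with all four internal edges matching, then vertical input `(i,-i)`
on the top edges forces the horizontal output `i` above and `-i` below on both
outer sides, and vertical input `(-i, i)` forces output `-i` above and `i`
below. -/
theorem junction_transduction (i j : ℤ) (hi : 1 ≤ i) (hij : i < j)
    (a b c d : Tile)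
    (hset : ({a, b, c, d} : Multiset Tile) =
      {⟨.num i, .num (-i), .num (-j), .num i⟩, ⟨.num (-i), .num i, .num j, .num (-i)⟩,
       ⟨.num (-j), .num i, .num i, .num (-i)⟩, ⟨.num j, .num (-i), .num (-i), .num i⟩})
    (h₁ : a.right = b.left) (h₂ : c.right = d.left)
    (h₃ : a.bottom = c.top) (h₄ : b.bottom = d.top) :
    ((a.top = .num i ∧ b.top = .num (-i)) →
      (a.left = .num i ∧ c.left = .num (-i) ∧ b.right = .num i ∧ d.right = .num (-i))) ∧
    ((a.top = .num (-i) ∧ b.top = .num i) →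
      (a.left = .num (-i) ∧ c.left = .num i ∧ b.right = .num (-i) ∧ d.right = .num i)) := by

  have ha : a ∈ ({a, b, c, d} : Multiset Tile) := by simp
  have hb : b ∈ ({a, b, c, d} : Multiset Tile) := by simp
  have hc : c ∈ ({a, b, c, d} : Multiset Tile) := by simp
  have hd : d ∈ ({a, b, c, d} : Multiset Tile) := by simp
  rw [hset] at ha hb hc hd
  simp only [Multiset.mem_cons, Multiset.mem_singleton, Multiset.insert_eq_cons] at ha hb hc hd
  clear hset
  rcases ha with rfl|rfl|rfl|rfl <;> rcases hb with rfl|rfl|rfl|rfl <;>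
    rcases hc with rfl|rfl|rfl|rfl <;> rcases hd with rfl|rfl|rfl|rfl <;>
    (simp only [Lab.num.injEq] at *) <;>
    constructor <;> rintro ⟨e1, e2⟩ <;> first | omega | exact ⟨trivial, trivial, trivial, trivial⟩
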